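/- arXiv:1601.06692 — 2 statements merged into one kernel-verified Lean document; each statement's English description precedes it below -/
import Mathlib

section
/- Let $V$ be a finite-dimensional complex vector space and $P : V \to V$ a linear endomorphism. Then the set of positive integers admits a finite partition $\mathbb{N} = \mathbb{N}_1 \cup \dots \cup \mathbb{N}_r$, together with integers $m_1 \in \mathbb{N}_1, \dots, m_r \in \mathbb{N}_r$ and natural numbers $\nu_1, \dots, \nu_r \in \{0, 1, \dots, \dim_{\mathbb{C}} V\}$, such that for each $j$ the integer $m_j$ divides every element of $\mathbb{N}_j$, and $\dim_{\mathbb{C}} \ker(P^m - \mathrm{id}) = \nu_j$ for every $m \in \mathbb{N}_j$. -/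
private lemma pow_mul_fix {V : Type*} [AddCommGroup V] [Module ℂ V] (P : V →ₗ[ℂ] V)
    {n : ℕ} {v : V} (h : (P ^ n) v = v) (k : ℕ) : (P ^ (n * k)) v = v := by
  induction k with
  | zero => simp
  | succ k ih => rw [Nat.mul_succ, pow_add, Module.End.mul_apply, h, ih]

private lemma gcd_fix {V : Type*} [AddCommGroup V] [Module ℂ V] (P : V →ₗ[ℂ] V) :
    ∀ n : ℕ, ∀ {M : ℕ} {v : V}, (P ^ n) v = v → (P ^ M) v = v →
      (P ^ (Nat.gcd n M)) v = v := by
  intro n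
  induction n using Nat.strong_induction_on with
  | _ n ih =>
    intro M v hn hM
    match n, hn with
    | 0, _ => simpa using hM
    | (n+1), hn =>
      rw [Nat.gcd_succ]
      refine ih (M % (n+1)) (Nat.mod_lt _ (Nat.succ_pos n)) ?_ hn
      have hmd : M % (n+1) + (n+1) * (M / (n+1)) = M := Nat.mod_add_div M (n+1)
      calc (P ^ (M % (n+1))) v
          = (P ^ (M % (n+1))) ((P ^ ((n+1) * (M / (n+1)))) v) := by
            rw [pow_mul_fix P hn]
        _ = (P ^ M) v := by rw [← Module.End.mul_apply, ← pow_add, hmd]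
        _ = v := hM

private lemma mem_K {V : Type*} [AddCommGroup V] [Module ℂ V] (P : V →ₗ[ℂ] V)
    (n : ℕ) (v : V) : v ∈ LinearMap.ker (P ^ n - 1) ↔ (P ^ n) v = v := by
  rw [LinearMap.mem_ker, LinearMap.sub_apply, Module.End.one_apply, sub_eq_zero]

private lemma K_mono {V : Type*} [AddCommGroup V] [Module ℂ V] (P : V →ₗ[ℂ] V)
    {d n : ℕ} (h : d ∣ n) :
    LinearMap.ker (P ^ d - 1) ≤ LinearMap.ker (P ^ n - 1) := by
  obtain ⟨k, rfl⟩ := h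
  intro v hv
  rw [mem_K] at hv ⊢
  exact pow_mul_fix P hv k

/-- Partition lemma for the nullities `dim ker (Pᵐ - id)` (arithmetic core of
Gromoll–Meyer type Lemma 3.7): for a linear endomorphism `P` of a finite-dimensional
complex vector space, the set of positive integers admits a finite partition
`ℕ₁ ∪ ... ∪ ℕᵣ`, with integers `mⱼ ∈ ℕⱼ` and numbers `νⱼ ∈ {0, 1, ..., dim V}`, such that
`mⱼ` divides every element of `ℕⱼ` and `dim ker (Pᵐ - id) = νⱼ` for all `m ∈ ℕⱼ`. -/
theorem partition_nullities (V : Type*) [AddCommGroup V] [Module ℂ V]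
    [FiniteDimensional ℂ V] (P : V →ₗ[ℂ] V) :
    ∃ (r : ℕ) (N : Fin r → Set ℕ) (m : Fin r → ℕ) (ν : Fin r → ℕ),
      (∀ i j, i ≠ j → Disjoint (N i) (N j)) ∧
      (⋃ j, N j) = {n : ℕ | 0 < n} ∧
      (∀ j, m j ∈ N j) ∧
      (∀ j, ν j ≤ Module.finrank ℂ V) ∧
      (∀ j, ∀ n ∈ N j, m j ∣ n) ∧
      (∀ j, ∀ n ∈ N j, Module.finrank ℂ ↥(LinearMap.ker (P ^ n - 1)) = ν j) := by
  classical
  set K : ℕ → Submodule ℂ V := fun n => LinearMap.ker (P ^ n - 1) with hK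
  -- the set of attained nullities
  set T : Set ℕ := {k | ∃ n, 0 < n ∧ Module.finrank ℂ (K n) = k} with hT
  have hTne : T.Nonempty := ⟨_, 1, one_pos, rfl⟩
  have hTbdd : BddAbove T := by
    refine ⟨Module.finrank ℂ V, ?_⟩
    rintro k ⟨n, -, rfl⟩
    exact Submodule.finrank_le _
  obtain ⟨M, hM0, hMmax⟩ : ∃ M, 0 < M ∧ Module.finrank ℂ (K M) = sSup T :=
    Nat.sSup_mem hTne hTbdd
  -- K M dominates every K n
  have hdom : ∀ n, 0 < n → K n ≤ K M := by
    intro n hn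
    have h1 : K n ≤ K (n * M) := K_mono P ⟨M, rfl⟩
    have h2 : K M ≤ K (n * M) := K_mono P ⟨n, mul_comm n M⟩
    have h3 : Module.finrank ℂ (K (n * M)) ≤ Module.finrank ℂ (K M) := by
      rw [hMmax]
      exact le_csSup hTbdd ⟨n * M, Nat.mul_pos hn hM0, rfl⟩
    have heq : K M = K (n * M) := Submodule.eq_of_le_of_finrank_le h2 h3
    exact heq ▸ h1
  -- K n = K (gcd n M)
  have hgcd : ∀ n, 0 < n → K n = K (Nat.gcd n M) := by
    intro n hn
    apply le_antisymm
    · intro v hv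
      have hvM : v ∈ K M := hdom n hn hv
      rw [hK] at hv hvM ⊢
      rw [mem_K] at hv hvM ⊢
      exact gcd_fix P n hv hvM
    · exact K_mono P (Nat.gcd_dvd_left n M)
  -- index by divisors of M
  set r : ℕ := M.divisors.card with hr
  set e : Fin r ≃ M.divisors := M.divisors.equivFin.symm with he
  refine ⟨r, fun j => {n | 0 < n ∧ Nat.gcd n M = (e j : ℕ)}, fun j => (e j : ℕ),
    fun j => Module.finrank ℂ (K (e j : ℕ)), ?_, ?_, ?_, ?_, ?_, ?_⟩
  · intro i j hij
    rw [Set.disjoint_left]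
    rintro n ⟨-, hi⟩ ⟨-, hj⟩
    exact hij (e.injective (Subtype.ext (hi ▸ hj ▸ rfl)))
  · ext n
    simp only [Set.mem_iUnion, Set.mem_setOf_eq]
    constructor
    · rintro ⟨j, hn, -⟩; exact hn
    · intro hn
      have hmem : Nat.gcd n M ∈ M.divisors :=
        Nat.mem_divisors.2 ⟨Nat.gcd_dvd_right n M, hM0.ne'⟩
      refine ⟨e.symm ⟨Nat.gcd n M, hmem⟩, hn, ?_⟩
      rw [Equiv.apply_symm_apply]
  · intro j
    have hd : (e j : ℕ) ∣ M := (Nat.mem_divisors.1 (e j).2).1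
    have hdpos : 0 < (e j : ℕ) := Nat.pos_of_mem_divisors (e j).2
    exact ⟨hdpos, Nat.gcd_eq_left hd⟩
  · intro j; exact Submodule.finrank_le _
  · rintro j n ⟨-, hgn⟩
    show (e j : ℕ) ∣ n
    rw [← hgn]
    exact Nat.gcd_dvd_left n M
  · rintro j n ⟨hn, hgn⟩
    have h : K n = K (e j : ℕ) := by rw [hgcd n hn, hgn]
    show Module.finrank ℂ (K n) = Module.finrank ℂ (K (e j : ℕ))
    rw [h]
end

section
/- Let $B$ be a symmetric bilinear form on a finite-dimensional real vector space $V$, let $W \subseteq V$ be a vector subspace, and let $W^{\perp} := \{v \in V \mid B(v, w) = 0 \text{ for all } w \in W\}$ denote its $B$-orthogonal. Then $\mathrm{ind}(B) + \dim(\ker(B) \cap W) = \mathrm{ind}(B|_{W \times W}) + \mathrm{ind}(B|_{W^{\perp} \times W^{\perp}}) + \dim(W \cap W^{\perp})$. -/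
/-- The index of a bilinear form `B` on a real vector space: the maximal dimension of a
subspace on which `B` is negative definite. -/
noncomputable def bilinIndex {V : Type*} [AddCommGroup V] [Module ℝ V]
    (B : V →ₗ[ℝ] V →ₗ[ℝ] ℝ) : ℕ :=
  sSup {n : ℕ | ∃ W : Submodule ℝ V, Module.finrank ℝ W = n ∧ ∀ v ∈ W, v ≠ 0 → B v v < 0}

/-- The `B`-orthogonal of a subspace `W`: all vectors `v` with `B v w = 0` for every
`w ∈ W`. -/
def bilinOrthogonal {V : Type*} [AddCommGroup V] [Module ℝ V]
    (B : V →ₗ[ℝ] V →ₗ[ℝ] ℝ) (W : Submodule ℝ V) : Submodule ℝ V where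
  carrier := {v : V | ∀ w ∈ W, B v w = 0}
  add_mem' := by
    intro a b ha hb w hw
    simp [ha w hw, hb w hw]
  zero_mem' := by
    intro w hw
    simp
  smul_mem' := by
    intro c a ha w hw
    simp [ha w hw]

/-!
By Sylvester's law of inertia, `ind B + ind (-B) + dim ker B = dim V`, and a subspace `S` on
which `B` is nonpositive has `dim S ≤ ind B + dim (S ∩ ker B)` (add `ker B` to it). A maximal
negative subspace of `W`, one of `W^⊥` and the isotropic subspace `W ∩ W^⊥` are mutually
`B`-orthogonal and span such an `S`; this gives the inequality `≥` in the formula. The same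
inequality for `-B`, added to it and combined with Sylvester's law for `B`, `B|W`, `B|W^⊥` and
with `W^⊥ ∩ W^⊥⊥ = (W + W^⊥)^⊥`, turns out to be an equality, so both inequalities are.
-/

open Module QuadraticMap QuadraticForm LinearMap

section Index

variable {V : Type*} [AddCommGroup V] [Module ℝ V] (B : V →ₗ[ℝ] V →ₗ[ℝ] ℝ)

def IsNegDefOn (N : Submodule ℝ V) : Prop :=
  ∀ v ∈ N, v ≠ 0 → B v v < 0

lemma isNegDefOn_iff_posDef_restrict {N : Submodule ℝ V} :
    IsNegDefOn B N ↔ ((-BilinMap.toQuadraticMap B).restrict N).PosDef := by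
  simp [IsNegDefOn, QuadraticMap.PosDef, BilinMap.toQuadraticMap_apply]

variable {B} in
lemma radical_toQuadraticMap (hB : ∀ v w, B v w = B w v) :
    (BilinMap.toQuadraticMap B).radical = ker B := by
  have hflip : flip B = B := ext₂ fun v w => hB w v
  rw [radical_eq_ker_polarBilin, BilinMap.polarBilin_toQuadraticMap, hflip, ← two_smul ℝ B,
    ker_smul _ _ two_ne_zero]

variable [FiniteDimensional ℝ V]

lemma bilinIndex_eq_sigNeg : bilinIndex B = sigNeg (BilinMap.toQuadraticMap B) := by
  rw [← (sigNeg_isGreatest _).csSup_eq, bilinIndex]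
  simp_rw [← isNegDefOn_iff_posDef_restrict]
  rfl

lemma bilinIndex_neg_eq_sigPos : bilinIndex (-B) = sigPos (BilinMap.toQuadraticMap B) := by
  rw [bilinIndex_eq_sigNeg, BilinMap.toQuadraticMap_neg, sigNeg_neg]

lemma exists_isNegDefOn_finrank_eq_bilinIndex :
    ∃ N : Submodule ℝ V, IsNegDefOn B N ∧ finrank ℝ N = bilinIndex B := by
  simp_rw [bilinIndex_eq_sigNeg, isNegDefOn_iff_posDef_restrict, and_comm]
  exact exists_finrank_eq_sigNeg_and_negDef _

variable {B}

lemma bilinIndex_add_bilinIndex_neg_add_finrank_ker (hB : ∀ v w, B v w = B w v) :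
    bilinIndex B + bilinIndex (-B) + finrank ℝ (ker B) = finrank ℝ V := by
  rw [bilinIndex_eq_sigNeg, bilinIndex_neg_eq_sigPos, ← radical_toQuadraticMap hB,
    add_comm (sigNeg _)]
  exact sigPos_add_sigNeg_add_radical

lemma finrank_le_bilinIndex_add_finrank_ker (hB : ∀ v w, B v w = B w v)
    {S : Submodule ℝ V} (hS : ∀ x ∈ S, B x x ≤ 0) :
    finrank ℝ S ≤ bilinIndex B + finrank ℝ (ker B) := by
  have hpos := sigPos_add_finrank_le_of_nonpos (Q := BilinMap.toQuadraticMap B) hS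
  have hsyl := bilinIndex_add_bilinIndex_neg_add_finrank_ker hB
  rw [bilinIndex_neg_eq_sigPos] at hsyl
  omega

end Index

section Orthogonality

variable {V : Type*} [AddCommGroup V] [Module ℝ V] {B : V →ₗ[ℝ] V →ₗ[ℝ] ℝ}

lemma apply_add_add_of_apply_eq_zero (hB : ∀ v w, B v w = B w v) {x y : V} (hxy : B x y = 0) :
    B (x + y) (x + y) = B x x + B y y := by
  simp only [map_add, LinearMap.add_apply, hB y x, hxy]
  ring

lemma bilinOrthogonal_eq_comap_dualAnnihilator (W : Submodule ℝ V) :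
    bilinOrthogonal B W = W.dualAnnihilator.comap B := by
  ext v
  exact (Submodule.mem_dualAnnihilator (B v)).symm

lemma bilinOrthogonal_sup (N M : Submodule ℝ V) :
    bilinOrthogonal B (N ⊔ M) = bilinOrthogonal B N ⊓ bilinOrthogonal B M := by
  simp only [bilinOrthogonal_eq_comap_dualAnnihilator, Submodule.dualAnnihilator_sup_eq,
    Submodule.comap_inf]

lemma ker_le_bilinOrthogonal (W : Submodule ℝ V) : ker B ≤ bilinOrthogonal B W := by
  rw [bilinOrthogonal_eq_comap_dualAnnihilator, ← Submodule.comap_bot]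
  exact Submodule.comap_mono bot_le

lemma bilinOrthogonal_neg (W : Submodule ℝ V) :
    bilinOrthogonal (-B) W = bilinOrthogonal B W := by
  ext v
  simp [bilinOrthogonal_eq_comap_dualAnnihilator]

lemma bilinOrthogonal_eq_orthogonal (hB : ∀ v w, B v w = B w v) (W : Submodule ℝ V) :
    bilinOrthogonal B W = BilinForm.orthogonal B W := by
  ext v
  simp only [BilinForm.mem_orthogonal_iff, ← hB v]
  rfl

lemma finrank_add_finrank_bilinOrthogonal [FiniteDimensional ℝ V] (hB : ∀ v w, B v w = B w v)
    (W : Submodule ℝ V) :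
    finrank ℝ W + finrank ℝ (bilinOrthogonal B W) =
      finrank ℝ V + finrank ℝ (W ⊓ ker B : Submodule ℝ V) := by
  rw [bilinOrthogonal_eq_orthogonal hB]
  exact BilinForm.finrank_add_finrank_orthogonal' W

end Orthogonality

lemma finrank_sup_eq_add_of_disjoint {K V : Type*} [DivisionRing K] [AddCommGroup V]
    [Module K V] [FiniteDimensional K V] {N M : Submodule K V} (h : Disjoint N M) :
    finrank K (N ⊔ M : Submodule K V) = finrank K N + finrank K M := by
  rw [← Submodule.finrank_sup_add_finrank_inf_eq, h.eq_bot, finrank_bot, add_zero]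

namespace IsNegDefOn

variable {V : Type*} [AddCommGroup V] [Module ℝ V] {B : V →ₗ[ℝ] V →ₗ[ℝ] ℝ}
  {U : Submodule ℝ V}

lemma apply_self_nonpos (hU : IsNegDefOn B U) {v : V} (hv : v ∈ U) : B v v ≤ 0 := by
  rcases eq_or_ne v 0 with rfl | hv0
  · simp
  · exact (hU v hv hv0).le

lemma disjoint (hU : IsNegDefOn B U) {T : Submodule ℝ V} (hT : T ≤ bilinOrthogonal B U) :
    Disjoint U T := by
  refine Submodule.disjoint_def.2 fun x hxU hxT => ?_
  by_contra hx
  exact (hU x hxU hx).ne (hT hxT x hxU)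

lemma sup (hB : ∀ v w, B v w = B w v) (hU : IsNegDefOn B U) {M : Submodule ℝ V}
    (hM : IsNegDefOn B M) (hMU : M ≤ bilinOrthogonal B U) : IsNegDefOn B (U ⊔ M) := by
  intro x hx hx0
  obtain ⟨u, hu, m, hm, rfl⟩ := Submodule.mem_sup.1 hx
  rw [apply_add_add_of_apply_eq_zero hB (by rw [hB]; exact hMU hm u hu)]
  rcases eq_or_ne u 0 with rfl | hu0
  · rw [zero_add] at hx0
    simpa using hM m hm hx0
  · exact add_neg_of_neg_of_nonpos (hU u hu hu0) (hM.apply_self_nonpos hm)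

end IsNegDefOn

section IndexBounds

variable {V : Type*} [AddCommGroup V] [Module ℝ V] [FiniteDimensional ℝ V]
  {B : V →ₗ[ℝ] V →ₗ[ℝ] ℝ}

lemma finrank_le_bilinIndex_add_finrank_inf_ker (hB : ∀ v w, B v w = B w v)
    {S : Submodule ℝ V} (hS : ∀ x ∈ S, B x x ≤ 0) :
    finrank ℝ S ≤ bilinIndex B + finrank ℝ (S ⊓ ker B : Submodule ℝ V) := by
  have hSK : ∀ x ∈ S ⊔ ker B, B x x ≤ 0 := by
    intro x hx
    obtain ⟨s, hs, k, hk, rfl⟩ := Submodule.mem_sup.1 hx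
    rw [mem_ker] at hk
    rw [apply_add_add_of_apply_eq_zero hB (by rw [hB, hk, LinearMap.zero_apply]), hk,
      LinearMap.zero_apply, add_zero]
    exact hS s hs
  have := finrank_le_bilinIndex_add_finrank_ker hB hSK
  have := Submodule.finrank_sup_add_finrank_inf_eq S (ker B)
  omega

-- `U ⊔ D` is `B`-nonpositive, and `U` being definite forces `(U ⊔ D) ⊓ ker B ≤ D`.
lemma finrank_add_finrank_le_bilinIndex_add (hB : ∀ v w, B v w = B w v)
    {U D : Submodule ℝ V} (hU : IsNegDefOn B U) (hDU : D ≤ bilinOrthogonal B U)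
    (hDD : D ≤ bilinOrthogonal B D) :
    finrank ℝ U + finrank ℝ D ≤
      bilinIndex B + finrank ℝ (D ⊓ ker B : Submodule ℝ V) := by
  have hnonpos : ∀ x ∈ U ⊔ D, B x x ≤ 0 := by
    intro x hx
    obtain ⟨u, hu, d, hd, rfl⟩ := Submodule.mem_sup.1 hx
    rw [apply_add_add_of_apply_eq_zero hB (by rw [hB]; exact hDU hd u hu), hDD hd d hd,
      add_zero]
    exact hU.apply_self_nonpos hu
  have hker : (U ⊔ D) ⊓ ker B ≤ D ⊓ ker B := by
    rintro _ ⟨hx, hxK⟩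
    obtain ⟨u, hu, d, hd, rfl⟩ := Submodule.mem_sup.1 hx
    obtain rfl : u = 0 := by
      by_contra hu0
      have hxu : B (u + d) u = B u u := by
        rw [map_add, LinearMap.add_apply, hDU hd u hu, add_zero]
      rw [mem_ker.1 hxK, LinearMap.zero_apply] at hxu
      exact (hU u hu hu0).ne hxu.symm
    rw [zero_add] at hxK ⊢
    exact ⟨hd, hxK⟩
  calc finrank ℝ U + finrank ℝ D = finrank ℝ (U ⊔ D : Submodule ℝ V) :=
        (finrank_sup_eq_add_of_disjoint (hU.disjoint hDU)).symm
    _ ≤ bilinIndex B + finrank ℝ ((U ⊔ D) ⊓ ker B : Submodule ℝ V) :=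
        finrank_le_bilinIndex_add_finrank_inf_ker hB hnonpos
    _ ≤ bilinIndex B + finrank ℝ (D ⊓ ker B : Submodule ℝ V) := by
        gcongr
        exact Submodule.finrank_mono hker

end IndexBounds

section Restriction

variable {V : Type*} [AddCommGroup V] [Module ℝ V] {B : V →ₗ[ℝ] V →ₗ[ℝ] ℝ}

lemma ker_domRestrict₁₂_self (W : Submodule ℝ V) :
    ker (B.domRestrict₁₂ W W) = (W ⊓ bilinOrthogonal B W).comap W.subtype := by
  ext x
  simp only [mem_ker, Submodule.mem_comap, Submodule.mem_inf, Submodule.subtype_apply,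
    SetLike.coe_mem, true_and, LinearMap.ext_iff, domRestrict₁₂_apply, LinearMap.zero_apply,
    Subtype.forall]
  rfl

variable [FiniteDimensional ℝ V]

lemma exists_le_isNegDefOn_finrank_eq_bilinIndex_domRestrict₁₂ (W : Submodule ℝ V) :
    ∃ N ≤ W, IsNegDefOn B N ∧ finrank ℝ N = bilinIndex (B.domRestrict₁₂ W W) := by
  obtain ⟨N, hN, hrank⟩ := exists_isNegDefOn_finrank_eq_bilinIndex (B.domRestrict₁₂ W W)
  refine ⟨N.map W.subtype, Submodule.map_subtype_le W N, ?_, by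
    rw [Submodule.finrank_map_subtype_eq, hrank]⟩
  rintro _ ⟨x, hx, rfl⟩ hx0
  exact hN x hx (by rintro rfl; exact hx0 rfl)

lemma bilinIndex_domRestrict₁₂_add_bilinIndex_neg_domRestrict₁₂
    (hB : ∀ v w, B v w = B w v) (W : Submodule ℝ V) :
    bilinIndex (B.domRestrict₁₂ W W) + bilinIndex ((-B).domRestrict₁₂ W W) +
      finrank ℝ (W ⊓ bilinOrthogonal B W : Submodule ℝ V) = finrank ℝ W := by
  rw [← (Submodule.comapSubtypeEquivOfLe inf_le_left).finrank_eq, ← ker_domRestrict₁₂_self]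
  exact bilinIndex_add_bilinIndex_neg_add_finrank_ker fun v w => hB v w

lemma bilinIndex_domRestrict₁₂_add_add_finrank_le (hB : ∀ v w, B v w = B w v)
    (W : Submodule ℝ V) :
    bilinIndex (B.domRestrict₁₂ W W) +
        bilinIndex (B.domRestrict₁₂ (bilinOrthogonal B W) (bilinOrthogonal B W)) +
        finrank ℝ (W ⊓ bilinOrthogonal B W : Submodule ℝ V) ≤
      bilinIndex B + finrank ℝ (ker B ⊓ W : Submodule ℝ V) := by
  obtain ⟨N, hNW, hN, hNrank⟩ :=
    exists_le_isNegDefOn_finrank_eq_bilinIndex_domRestrict₁₂ (B := B) W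
  obtain ⟨M, hMW, hM, hMrank⟩ :=
    exists_le_isNegDefOn_finrank_eq_bilinIndex_domRestrict₁₂ (B := B) (bilinOrthogonal B W)
  have hMN : M ≤ bilinOrthogonal B N := fun m hm n hn => hMW hm n (hNW hn)
  have hDU : W ⊓ bilinOrthogonal B W ≤ bilinOrthogonal B (N ⊔ M) := by
    rw [bilinOrthogonal_sup]
    exact fun d hd =>
      ⟨fun n hn => hd.2 n (hNW hn), fun m hm => by rw [hB]; exact hMW hm d hd.1⟩
  have hDD : W ⊓ bilinOrthogonal B W ≤ bilinOrthogonal B (W ⊓ bilinOrthogonal B W) :=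
    fun d hd e he => hd.2 e he.1
  have hker : W ⊓ bilinOrthogonal B W ⊓ ker B = ker B ⊓ W := by
    rw [inf_assoc, inf_eq_right.2 (ker_le_bilinOrthogonal W), inf_comm]
  have h := finrank_add_finrank_le_bilinIndex_add hB (hN.sup hB hM hMN) hDU hDD
  rwa [finrank_sup_eq_add_of_disjoint (hN.disjoint hMN), hNrank, hMrank, hker] at h

end Restriction

/-- Index formula for symmetric bilinear forms: if `B` is a symmetric bilinear form on a
finite-dimensional real vector space `V`, `W ⊆ V` a subspace and `W^⊥` its `B`-orthogonal,
then `ind(B) + dim(ker B ∩ W) = ind(B|_{W×W}) + ind(B|_{W^⊥×W^⊥}) + dim(W ∩ W^⊥)`. -/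
theorem bilin_index_formula {V : Type*} [AddCommGroup V] [Module ℝ V]
    [FiniteDimensional ℝ V] (B : V →ₗ[ℝ] V →ₗ[ℝ] ℝ) (hB : ∀ v w, B v w = B w v)
    (W : Submodule ℝ V) :
    bilinIndex B + Module.finrank ℝ ↥(LinearMap.ker B ⊓ W) =
      bilinIndex (LinearMap.domRestrict₁₂ B W W) +
        bilinIndex (LinearMap.domRestrict₁₂ B (bilinOrthogonal B W) (bilinOrthogonal B W)) +
        Module.finrank ℝ ↥(W ⊓ bilinOrthogonal B W) := by
  have hle := bilinIndex_domRestrict₁₂_add_add_finrank_le hB W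
  have hge :=
    bilinIndex_domRestrict₁₂_add_add_finrank_le (B := -B) (fun v w => by simp [hB v w]) W
  rw [bilinOrthogonal_neg, ker_neg] at hge
  have hV := bilinIndex_add_bilinIndex_neg_add_finrank_ker hB
  have hW := bilinIndex_domRestrict₁₂_add_bilinIndex_neg_domRestrict₁₂ hB W
  have hP :=
    bilinIndex_domRestrict₁₂_add_bilinIndex_neg_domRestrict₁₂ hB (bilinOrthogonal B W)
  have hWP := finrank_add_finrank_bilinOrthogonal hB W
  have hsup := finrank_add_finrank_bilinOrthogonal hB (W ⊔ bilinOrthogonal B W)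
  rw [inf_eq_right.2 ((ker_le_bilinOrthogonal W).trans le_sup_right),
    bilinOrthogonal_sup] at hsup
  have hinf := Submodule.finrank_sup_add_finrank_inf_eq W (bilinOrthogonal B W)
  rw [inf_comm] at hWP
  omega
end
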